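/- If for ℙ-a.e. ω there is a random invariant density h_ω ∈ D(X,m) such that m({h_{σ^{-n}ω} > α}) → 1 as α → 0 uniformly in n, then for ℙ-a.e. ω the family {P^{(n)}_{σ^{-n}ω} g}_n is uniformly integrable for every g ∈ L¹(X,m) with g ≥ 0. -/

import Mathlib

open MeasureTheory Filter Topology

/-!
Write `Q n` for the backward cocycle `P^{(n)}_{σ^{-n}ω}` and `hₙ = h_{σ^{-n}ω}`, so that `Q n` is a
Markov operator with `Q n hₙ = h_ω`. For `c > 0` split `g = g ⊓ c hₙ + (g - g ⊓ c hₙ)`. The first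
part is mapped below `c h_ω`, whose integral over `A` is small once `m A` is. The second part is
nonnegative, so `Q n` preserves its integral, and it lives on `{c hₙ < g}`. Taking `c = M / α`,
this set lies in `{hₙ ≤ α} ∪ {M < g}`, whose measure is small uniformly in `n` by the hypothesis on
`h` and for `M` large; absolute continuity of `∫ g` then bounds the second part.
-/

/-- `P_ω^{(n)} = P_{σ^{n-1}ω} ∘ ⋯ ∘ P_ω`, `P_ω^{(0)} = id`. -/
noncomputable def clmCocycle {Ω 𝔛 : Type*} [NormedAddCommGroup 𝔛] [NormedSpace ℝ 𝔛]
    (σ : Ω → Ω) (P : Ω → (𝔛 →L[ℝ] 𝔛)) : ℕ → Ω → (𝔛 →L[ℝ] 𝔛)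
  | 0, _ => ContinuousLinearMap.id ℝ 𝔛
  | n + 1, ω => (clmCocycle σ P n (σ ω)).comp (P ω)

namespace MeasureTheory

lemma Measure.QuasiMeasurePreserving.ae_forall_iterate {α : Type*} [MeasurableSpace α]
    {μ : Measure α} {f : α → α} (hf : Measure.QuasiMeasurePreserving f μ μ) {p : α → Prop}
    (hp : ∀ᵐ x ∂μ, p x) : ∀ᵐ x ∂μ, ∀ n, p (f^[n] x) :=
  ae_all_iff.2 fun n => (hf.iterate n).ae hp

variable {X : Type*} [MeasurableSpace X] {m : Measure X}

lemma Integrable.exists_pos_forall_setIntegral_lt {f : X → ℝ} (hf : Integrable f m) {ε : ℝ}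
    (hε : 0 < ε) : ∃ δ > (0 : ℝ), ∀ s, m s < ENNReal.ofReal δ → ∫ x in s, f x ∂m < ε := by
  have hlim := hf.tendsto_setIntegral_nhds_zero (l := comap m (𝓝 0)) (s := id) tendsto_comap
  obtain ⟨δ, hδ, hsmall⟩ :=
    (ENNReal.nhds_zero_basis.comap m).eventually_iff.1 (hlim.eventually (gt_mem_nhds hε))
  obtain ⟨r, -, hr, hrδ⟩ := ENNReal.lt_iff_exists_real_btwn.1 hδ
  exact ⟨r, ENNReal.ofReal_pos.1 hr, fun s hs => hsmall (hs.trans hrδ)⟩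

lemma tendsto_measure_setOf_lt_atTop [IsFiniteMeasure m] {g : X → ℝ} (hg : AEMeasurable g m) :
    Tendsto (fun M : ℝ => m {x | M < g x}) atTop (𝓝 0) := by
  have hempty : (⋂ M : ℝ, {x | M < g x}) = ∅ :=
    Set.eq_empty_of_forall_notMem fun x hx => lt_irrefl (g x) (Set.mem_iInter.1 hx (g x))
  have hlim := tendsto_measure_iInter_atTop (fun M => nullMeasurableSet_lt aemeasurable_const hg)
    (fun M N hMN x (hx : N < g x) => hMN.trans_lt hx) ⟨0, measure_ne_top m {x | 0 < g x}⟩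
  rw [hempty, measure_empty] at hlim
  exact hlim

lemma measure_setOf_le_le_of_one_sub_le [IsZeroOrProbabilityMeasure m] {f : X → ℝ}
    (hf : Measurable f) {α : ℝ} {η : ENNReal} (h : 1 - η ≤ m {x | α < f x}) :
    m {x | f x ≤ α} ≤ η := by
  have hcompl : {x | f x ≤ α} = {x | α < f x}ᶜ := by ext; simp
  rw [hcompl]
  exact (prob_compl_le_one_sub_of_le_prob h (measurableSet_lt measurable_const hf)).trans
    tsub_tsub_le

lemma Lp.setOf_smul_lt_ae_subset {c α M : ℝ} (hc : 0 ≤ c) (hcα : c * α = M) (f g : Lp ℝ 1 m) :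
    {x | (c • f) x < g x} ≤ᵐ[m] ({x | f x ≤ α} ∪ {x | M < g x} : Set X) := by
  filter_upwards [Lp.coeFn_smul c f] with x hx (hlt : (c • f) x < g x)
  rw [hx, Pi.smul_apply, smul_eq_mul] at hlt
  show f x ≤ α ∨ M < g x
  by_contra! hout
  linarith [mul_le_mul_of_nonneg_left hout.1.le hc]

lemma Lp.integral_sub_inf_le_setIntegral {g k : Lp ℝ 1 m} (hk : 0 ≤ᵐ[m] ⇑k) :
    ∫ x, (g - g ⊓ k) x ∂m ≤ ∫ x in {x | k x < g x}, g x ∂m := by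
  have hs : MeasurableSet {x | k x < g x} :=
    measurableSet_lt (Lp.stronglyMeasurable k).measurable (Lp.stronglyMeasurable g).measurable
  rw [← integral_indicator hs]
  refine integral_mono_ae (L1.integrable_coeFn _) ((L1.integrable_coeFn g).indicator hs) ?_
  filter_upwards [Lp.coeFn_sub g (g ⊓ k), Lp.coeFn_inf g k, hk] with x hsub hinf hkx
  rw [hsub, Pi.sub_apply, hinf, Pi.inf_apply]
  by_cases hx : k x < g x
  · rw [Set.indicator_of_mem (show x ∈ {a | k a < g a} from hx), min_eq_right hx.le]
    linarith [show (0 : ℝ) ≤ k x from hkx]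
  · rw [Set.indicator_of_notMem (show x ∉ {a | k a < g a} from hx), min_eq_left (not_lt.1 hx),
      sub_self]

def IsMarkovOperator (T : Lp ℝ 1 m →L[ℝ] Lp ℝ 1 m) : Prop :=
  (∀ g : Lp ℝ 1 m, 0 ≤ᵐ[m] ⇑g → 0 ≤ᵐ[m] ⇑(T g)) ∧
    ∀ g : Lp ℝ 1 m, ∫ x, T g x ∂m = ∫ x, g x ∂m

namespace IsMarkovOperator

variable {S T : Lp ℝ 1 m →L[ℝ] Lp ℝ 1 m}

lemma id : IsMarkovOperator (ContinuousLinearMap.id ℝ (Lp ℝ 1 m)) :=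
  ⟨fun _ hg => hg, fun _ => rfl⟩

lemma comp (hS : IsMarkovOperator S) (hT : IsMarkovOperator T) : IsMarkovOperator (S.comp T) :=
  ⟨fun g hg => hS.1 _ (hT.1 g hg), fun g => (hS.2 _).trans (hT.2 g)⟩

lemma nonneg (hT : IsMarkovOperator T) {g : Lp ℝ 1 m} (hg : 0 ≤ g) : 0 ≤ T g :=
  (Lp.coeFn_nonneg _).1 (hT.1 g ((Lp.coeFn_nonneg g).2 hg))

lemma monotone (hT : IsMarkovOperator T) : Monotone T := fun f g hfg => by
  simpa only [map_sub, sub_nonneg] using hT.nonneg (sub_nonneg.2 hfg)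

lemma setIntegral_le_setIntegral_add_integral_sub_inf (hT : IsMarkovOperator T)
    (g k : Lp ℝ 1 m) (A : Set X) :
    ∫ x in A, T g x ∂m ≤ ∫ x in A, T k x ∂m + ∫ x, (g - g ⊓ k) x ∂m := by
  have hle : ∫ x in A, T (g ⊓ k) x ∂m ≤ ∫ x in A, T k x ∂m :=
    setIntegral_mono_ae (L1.integrable_coeFn _).integrableOn (L1.integrable_coeFn _).integrableOn
      ((Lp.coeFn_le _ _).2 (hT.monotone inf_le_right))
  have hrest : ∫ x in A, T (g - g ⊓ k) x ∂m ≤ ∫ x, (g - g ⊓ k) x ∂m :=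
    (setIntegral_le_integral (L1.integrable_coeFn _)
      (hT.1 _ ((Lp.coeFn_nonneg _).2 (sub_nonneg.2 inf_le_left)))).trans_eq (hT.2 _)
  have hsplit : ⇑(T g) =ᵐ[m] ⇑(T (g ⊓ k)) + ⇑(T (g - g ⊓ k)) := by
    have := Lp.coeFn_add (T (g ⊓ k)) (T (g - g ⊓ k))
    rwa [← map_add, add_sub_cancel] at this
  calc ∫ x in A, T g x ∂m = ∫ x in A, T (g ⊓ k) x ∂m + ∫ x in A, T (g - g ⊓ k) x ∂m := by
        rw [integral_congr_ae (ae_restrict_of_ae hsplit)]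
        exact integral_add (L1.integrable_coeFn _).integrableOn (L1.integrable_coeFn _).integrableOn
    _ ≤ ∫ x in A, T k x ∂m + ∫ x, (g - g ⊓ k) x ∂m := add_le_add hle hrest

end IsMarkovOperator

theorem exists_pos_forall_setIntegral_lt_of_isMarkovOperator [IsProbabilityMeasure m]
    {Q : ℕ → Lp ℝ 1 m →L[ℝ] Lp ℝ 1 m} (hQ : ∀ n, IsMarkovOperator (Q n))
    {f : ℕ → Lp ℝ 1 m} {f₀ : Lp ℝ 1 m} (hf : ∀ n, 0 ≤ᵐ[m] ⇑(f n)) (hQf : ∀ n, Q n (f n) = f₀)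
    (hunif : ∀ ε > (0 : ℝ), ∃ α > (0 : ℝ), ∀ n, 1 - ENNReal.ofReal ε ≤ m {x | α < f n x})
    (g : Lp ℝ 1 m) {ε : ℝ} (hε : 0 < ε) :
    ∃ δ > (0 : ℝ), ∀ A : Set X, m A < ENNReal.ofReal δ → ∀ n, ∫ x in A, Q n g x ∂m < ε := by
  obtain ⟨η, hη, hg_small⟩ := (L1.integrable_coeFn g).exists_pos_forall_setIntegral_lt (half_pos hε)
  obtain ⟨α, hα, hf_large⟩ := hunif (η / 2) (half_pos hη)
  obtain ⟨M, hM, hM_pos⟩ :=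
    (((tendsto_measure_setOf_lt_atTop (Lp.aestronglyMeasurable g).aemeasurable).eventually
      (gt_mem_nhds (ENNReal.ofReal_pos.2 (half_pos hη)))).and (eventually_gt_atTop 0)).exists
  set c := M / α
  have hc : 0 ≤ c := div_nonneg hM_pos.le hα.le
  obtain ⟨δ, hδ, hf₀_small⟩ :=
    (L1.integrable_coeFn (c • f₀)).exists_pos_forall_setIntegral_lt (half_pos hε)
  refine ⟨δ, hδ, fun A hA n => ?_⟩
  have hf_small : m {x | f n x ≤ α} ≤ ENNReal.ofReal (η / 2) :=
    measure_setOf_le_le_of_one_sub_le (Lp.stronglyMeasurable _).measurable (hf_large n)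
  have hsupp : m {x | (c • f n) x < g x} < ENNReal.ofReal η :=
    calc m {x | (c • f n) x < g x} ≤ m ({x | f n x ≤ α} ∪ {x | M < g x}) :=
          measure_mono_ae (Lp.setOf_smul_lt_ae_subset hc (div_mul_cancel₀ M hα.ne') (f n) g)
      _ ≤ m {x | f n x ≤ α} + m {x | M < g x} := measure_union_le _ _
      _ < ENNReal.ofReal (η / 2) + ENNReal.ofReal (η / 2) :=
        ENNReal.add_lt_add_of_le_of_lt (measure_ne_top m _) hf_small hM
      _ = ENNReal.ofReal η := by
        rw [← ENNReal.ofReal_add (half_pos hη).le (half_pos hη).le, add_halves]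
  have hcf : 0 ≤ᵐ[m] ⇑(c • f n) := by
    filter_upwards [Lp.coeFn_smul c (f n), hf n] with x hx hfx
    rw [hx, Pi.smul_apply, smul_eq_mul]
    exact mul_nonneg hc hfx
  calc ∫ x in A, Q n g x ∂m
      ≤ ∫ x in A, Q n (c • f n) x ∂m + ∫ x, (g - g ⊓ c • f n) x ∂m :=
        (hQ n).setIntegral_le_setIntegral_add_integral_sub_inf g _ A
    _ < ε / 2 + ε / 2 := by
        rw [map_smul, hQf n]
        exact add_lt_add (hf₀_small A hA)
          ((Lp.integral_sub_inf_le_setIntegral hcf).trans_lt (hg_small _ hsupp))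
    _ = ε := add_halves ε

end MeasureTheory

section Cocycle

variable {Ω 𝔛 : Type*} [NormedAddCommGroup 𝔛] [NormedSpace ℝ 𝔛] {σ τ : Ω → Ω}

lemma clmCocycle_succ_iterate (hστ : Function.LeftInverse σ τ) (P : Ω → 𝔛 →L[ℝ] 𝔛) (n : ℕ)
    (ω : Ω) :
    clmCocycle σ P (n + 1) (τ^[n + 1] ω) = (clmCocycle σ P n (τ^[n] ω)).comp (P (τ^[n + 1] ω)) := by
  rw [clmCocycle, Function.iterate_succ_apply', hστ]

lemma clmCocycle_iterate_apply_of_invariant (hστ : Function.LeftInverse σ τ)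
    {P : Ω → 𝔛 →L[ℝ] 𝔛} {h : Ω → 𝔛} {ω : Ω}
    (hh : ∀ k, P (τ^[k] ω) (h (τ^[k] ω)) = h (σ (τ^[k] ω))) (n : ℕ) :
    clmCocycle σ P n (τ^[n] ω) (h (τ^[n] ω)) = h ω := by
  induction n with
  | zero => rfl
  | succ n ih =>
    rw [clmCocycle_succ_iterate hστ, ContinuousLinearMap.comp_apply, hh,
      Function.iterate_succ_apply', hστ, ih]

lemma isMarkovOperator_clmCocycle_iterate {X : Type*} [MeasurableSpace X] {m : Measure X}
    (hστ : Function.LeftInverse σ τ) {P : Ω → Lp ℝ 1 m →L[ℝ] Lp ℝ 1 m} {ω : Ω}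
    (hP : ∀ k, IsMarkovOperator (P (τ^[k] ω))) (n : ℕ) :
    IsMarkovOperator (clmCocycle σ P n (τ^[n] ω)) := by
  induction n with
  | zero => exact .id
  | succ n ih =>
    rw [clmCocycle_succ_iterate hστ]
    exact ih.comp (hP _)

end Cocycle

theorem uniform_integrability_from_invariant_density_general
    {Ω : Type*} [MeasurableSpace Ω] (ℙ : Measure Ω)
    {X : Type*} [MeasurableSpace X] (m : Measure X) [IsProbabilityMeasure m]
    (σ : Ω ≃ᵐ Ω) (hσ : Ergodic σ ℙ)
    (P : Ω → (Lp ℝ 1 m →L[ℝ] Lp ℝ 1 m))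
    (hMarkov : ∀ᵐ ω ∂ℙ,
      (∀ g : Lp ℝ 1 m, 0 ≤ᵐ[m] ⇑g → 0 ≤ᵐ[m] ⇑(P ω g)) ∧
      (∀ g : Lp ℝ 1 m, ∫ x, (P ω g) x ∂m = ∫ x, g x ∂m))
    (h : Ω → Lp ℝ 1 m)
    (hdens : ∀ᵐ ω ∂ℙ, (0 ≤ᵐ[m] ⇑(h ω)) ∧ ‖h ω‖ = 1 ∧ P ω (h ω) = h (σ ω))
    (hunif : ∀ᵐ ω ∂ℙ, ∀ ε > (0 : ℝ), ∃ α > (0 : ℝ), ∀ n : ℕ,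
      1 - ENNReal.ofReal ε ≤ m {x | α < h (σ.symm^[n] ω) x}) :
    ∀ᵐ ω ∂ℙ, ∀ g : Lp ℝ 1 m, 0 ≤ᵐ[m] ⇑g →
      ∀ ε > (0 : ℝ), ∃ δ > (0 : ℝ), ∀ A : Set X, MeasurableSet A →
        m A < ENNReal.ofReal δ → ∀ n : ℕ,
          ∫ x in A, (clmCocycle σ P n (σ.symm^[n] ω) g) x ∂m < ε := by
  have hστ : Function.LeftInverse σ σ.symm := σ.apply_symm_apply
  have hback : Measure.QuasiMeasurePreserving σ.symm ℙ ℙ :=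
    (hσ.toMeasurePreserving.symm σ).quasiMeasurePreserving
  filter_upwards [hback.ae_forall_iterate hMarkov, hback.ae_forall_iterate hdens, hunif]
    with ω hP hh hu g _ ε hε
  obtain ⟨δ, hδ, hsmall⟩ := exists_pos_forall_setIntegral_lt_of_isMarkovOperator
    (isMarkovOperator_clmCocycle_iterate hστ hP) (fun n => (hh n).1)
    (clmCocycle_iterate_apply_of_invariant hστ fun k => (hh k).2.2) hu g hε
  exact ⟨δ, hδ, fun A _ => hsmall A⟩

/-- If there is a random invariant density `h_ω` with
`m{h_{σ^{-n}ω} > α} → 1` as `α → 0` uniformly in `n`, then for ℙ-a.e. `ω`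
the family `{P^{(n)}_{σ^{-n}ω} g}_n` is uniformly integrable for every
nonnegative `g ∈ L¹(X,m)`. -/
theorem uniform_integrability_from_invariant_density
    {Ω : Type*} [MeasurableSpace Ω] (ℙ : Measure Ω) [IsProbabilityMeasure ℙ]
    {X : Type*} [MeasurableSpace X] (m : Measure X) [IsProbabilityMeasure m]
    (σ : Ω ≃ᵐ Ω) (hσ : Ergodic σ ℙ)
    (P : Ω → (Lp ℝ 1 m →L[ℝ] Lp ℝ 1 m))
    (hMarkov : ∀ᵐ ω ∂ℙ,
      (∀ g : Lp ℝ 1 m, 0 ≤ᵐ[m] ⇑g → 0 ≤ᵐ[m] ⇑(P ω g)) ∧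
      (∀ g : Lp ℝ 1 m, ∫ x, (P ω g) x ∂m = ∫ x, g x ∂m))
    (h : Ω → Lp ℝ 1 m)
    (hdens : ∀ᵐ ω ∂ℙ, (0 ≤ᵐ[m] ⇑(h ω)) ∧ ‖h ω‖ = 1 ∧ P ω (h ω) = h (σ ω))
    (hunif : ∀ᵐ ω ∂ℙ, ∀ ε > (0 : ℝ), ∃ α > (0 : ℝ), ∀ n : ℕ,
      1 - ENNReal.ofReal ε ≤ m {x | α < h (σ.symm^[n] ω) x}) :
    ∀ᵐ ω ∂ℙ, ∀ g : Lp ℝ 1 m, 0 ≤ᵐ[m] ⇑g →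
      ∀ ε > (0 : ℝ), ∃ δ > (0 : ℝ), ∀ A : Set X, MeasurableSet A →
        m A < ENNReal.ofReal δ → ∀ n : ℕ,
          ∫ x in A, (clmCocycle σ P n (σ.symm^[n] ω) g) x ∂m < ε :=
  uniform_integrability_from_invariant_density_general ℙ m σ hσ P hMarkov h hdens hunif
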